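/- arXiv:math/0506019 — 3 statements merged into one kernel-verified Lean document; each statement's English description precedes it below -/
import Mathlib

section
/- The extension relation on forcing conditions is transitive: if the condition (g, δ) extends (f, ε) and the condition (h, γ) extends (g, δ), then (h, γ) extends (f, ε). -/
open MeasureTheory

/-- A forcing condition: a finite string of naturals together with a positive
rational promise. -/
structure Cond where
  f : List ℕ
  ε : ℚ
  pos : 0 < ε

/-- `Dseg A g n m` is the set `D_{[n,m)}[g] = ⋂_{k ∈ [n,m)} A k (g k)`. -/
def Dseg (A : ℕ → ℕ → Set (ℕ → Bool)) (g : List ℕ) (n m : ℕ) : Set (ℕ → Bool) :=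
  ⋂ k ∈ Set.Ico n m, A k (g.getD k 0)

/-- The condition `q = (g, δ)` extends the condition `p = (f, ε)`: `f` is an initial
segment of `g`, `δ ≤ ε`, and if `f ≠ g` then `μ(Dom \ D_{[|f|,|g|)}[g]) + δ < ε`. -/
def Extends (μ : Measure (ℕ → Bool)) (Dom : Set (ℕ → Bool))
    (A : ℕ → ℕ → Set (ℕ → Bool)) (q p : Cond) : Prop :=
  p.f <+: q.f ∧ q.ε ≤ p.ε ∧
    (p.f ≠ q.f →
      μ (Dom \ Dseg A q.f p.f.length q.f.length) + ENNReal.ofReal (q.ε : ℝ) <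
        ENNReal.ofReal (p.ε : ℝ))

lemma Dseg_prefix_eq (A : ℕ → ℕ → Set (ℕ → Bool)) {g h : List ℕ} (hgh : g <+: h)
    (n m : ℕ) (hm : m ≤ g.length) : Dseg A h n m = Dseg A g n m := by
  obtain ⟨t, rfl⟩ := hgh
  unfold Dseg
  apply Set.iInter₂_congr
  intro k hk
  rw [List.getD_append _ _ _ _ (lt_of_lt_of_le hk.2 hm)]

lemma Dseg_split (A : ℕ → ℕ → Set (ℕ → Bool)) (g : List ℕ) {n m l : ℕ}
    (h1 : n ≤ m) (h2 : m ≤ l) : Dseg A g n l = Dseg A g n m ∩ Dseg A g m l := by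
  unfold Dseg
  rw [← Set.biInter_union]
  rw [Set.Ico_union_Ico_eq_Ico h1 h2]

/-- The extension relation on forcing conditions is transitive. -/
theorem extends_trans
    (μ : Measure (ℕ → Bool)) (Dom : Set (ℕ → Bool)) (A : ℕ → ℕ → Set (ℕ → Bool))
    (p q r : Cond) (hqp : Extends μ Dom A q p) (hrq : Extends μ Dom A r q) :
    Extends μ Dom A r p := by
  obtain ⟨hpq, hle1, hm1⟩ := hqp
  obtain ⟨hqr, hle2, hm2⟩ := hrq
  refine ⟨hpq.trans hqr, hle2.trans hle1, ?_⟩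
  intro hne
  by_cases hpq' : p.f = q.f
  · have hq : q.f ≠ r.f := fun h => hne (hpq'.trans h)
    have := hm2 hq
    rw [hpq']
    calc μ (Dom \ Dseg A r.f q.f.length r.f.length) + ENNReal.ofReal (r.ε : ℝ)
        < ENNReal.ofReal (q.ε : ℝ) := this
      _ ≤ ENNReal.ofReal (p.ε : ℝ) := ENNReal.ofReal_le_ofReal (by exact_mod_cast hle1)
  by_cases hqr' : q.f = r.f
  · have := hm1 hpq'
    rw [← hqr']
    calc μ (Dom \ Dseg A q.f p.f.length q.f.length) + ENNReal.ofReal (r.ε : ℝ)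
        ≤ μ (Dom \ Dseg A q.f p.f.length q.f.length) + ENNReal.ofReal (q.ε : ℝ) := by
          gcongr
      _ < ENNReal.ofReal (p.ε : ℝ) := this
  have h1 := hm1 hpq'
  have h2 := hm2 hqr'
  have hnp : p.f.length ≤ q.f.length := hpq.length_le
  have hnq : q.f.length ≤ r.f.length := hqr.length_le
  have hsplit : Dseg A r.f p.f.length r.f.length
      = Dseg A q.f p.f.length q.f.length ∩ Dseg A r.f q.f.length r.f.length := by
    rw [Dseg_split A r.f hnp hnq, Dseg_prefix_eq A hqr _ _ le_rfl]
  have hsub : Dom \ Dseg A r.f p.f.length r.f.length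
      ⊆ (Dom \ Dseg A q.f p.f.length q.f.length) ∪ (Dom \ Dseg A r.f q.f.length r.f.length) := by
    rw [hsplit, Set.diff_inter]
  calc μ (Dom \ Dseg A r.f p.f.length r.f.length) + ENNReal.ofReal (r.ε : ℝ)
      ≤ (μ (Dom \ Dseg A q.f p.f.length q.f.length)
          + μ (Dom \ Dseg A r.f q.f.length r.f.length)) + ENNReal.ofReal (r.ε : ℝ) := by
        gcongr
        exact (μ.mono hsub).trans (measure_union_le _ _)
    _ = μ (Dom \ Dseg A q.f p.f.length q.f.length)
          + (μ (Dom \ Dseg A r.f q.f.length r.f.length) + ENNReal.ofReal (r.ε : ℝ)) := by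
        ring
    _ < μ (Dom \ Dseg A q.f p.f.length q.f.length) + ENNReal.ofReal (q.ε : ℝ) := by
        have hfin : μ (Dom \ Dseg A q.f p.f.length q.f.length) ≠ ⊤ := by
          intro h
          rw [h] at h1
          simp at h1
        exact ENNReal.add_lt_add_left hfin h2
    _ < ENNReal.ofReal (p.ε : ℝ) := h1
end

section
/- Conditions with arbitrarily long strings are dense: assume μ is a finite measure on 2^ω, each set A k s is measurable, A k s ⊆ A k s′ whenever s ≤ s′, and Dom ⊆ ⋃_s A k s for every k. Then for every condition p and every n ∈ ℕ there is a condition q extending p with n^q > n. -/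
open MeasureTheory

/-! Extension is transitive: the promise `ε` of a condition pays for the measure lost when
its string is extended, and the losses along a chain of extensions add up by subadditivity
of `μ`. So it suffices to append one entry at a time. To extend `(f, ε)` at position
`k = |f|`, continuity of `μ` from above gives `μ (Dom \ A k s) → 0` as `s → ∞`, since the
measurable sets `A k s` increase to a cover of `Dom`; for `s` with `μ (Dom \ A k s) < ε / 2`
the condition `(f ++ [s], ε / 2)` extends `(f, ε)`. -/

open Filter Topology ENNReal

theorem tendsto_measure_diff_atTop_zero {α : Type*} [MeasurableSpace α] {μ : Measure α}
    {S : Set α} (hS : μ S ≠ ∞) {A : ℕ → Set α} (hA : ∀ i, MeasurableSet (A i))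
    (hmono : Monotone A) (hcover : S ⊆ ⋃ i, A i) :
    Tendsto (fun i ↦ μ (S \ A i)) atTop (𝓝 0) := by
  -- `S` need not be measurable, so continuity from above is applied to `μ.restrict S`.
  have : IsFiniteMeasure (μ.restrict S) := isFiniteMeasure_restrict.mpr hS
  have hrestrict : ∀ T, MeasurableSet T → μ (S \ T) = μ.restrict S Tᶜ := fun T hT ↦ by
    rw [Measure.restrict_apply hT.compl, Set.sdiff_eq, Set.inter_comm]
  have hlim : μ.restrict S (⋂ i, (A i)ᶜ) = 0 := by
    rw [← Set.compl_iUnion, ← hrestrict _ (MeasurableSet.iUnion hA),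
      Set.sdiff_eq_empty.mpr hcover, measure_empty]
  simp only [hrestrict _ (hA _)]
  rw [← hlim]
  exact tendsto_measure_iInter_atTop (fun i ↦ (hA i).compl.nullMeasurableSet)
    (fun i j hij ↦ Set.compl_subset_compl.mpr (hmono hij)) ⟨0, measure_ne_top _ _⟩

section Dseg

variable {A : ℕ → ℕ → Set (ℕ → Bool)}

theorem Dseg_eq_of_prefix {g g' : List ℕ} (h : g <+: g') {n m : ℕ} (hm : m ≤ g.length) :
    Dseg A g' n m = Dseg A g n m := by
  obtain ⟨t, rfl⟩ := h
  refine Set.iInter₂_congr fun k hk ↦ ?_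
  rw [List.getD_append _ _ _ _ (hk.2.trans_le hm)]

theorem Dseg_inter_Dseg_subset (g : List ℕ) (n m l : ℕ) :
    Dseg A g n m ∩ Dseg A g m l ⊆ Dseg A g n l := by
  simp only [Dseg, Set.subset_def, Set.mem_inter_iff, Set.mem_iInter, Set.mem_Ico]
  intro x ⟨hnm, hml⟩ k hk
  rcases lt_or_ge k m with h | h
  · exact hnm k ⟨hk.1, h⟩
  · exact hml k ⟨h, hk.2⟩

theorem Dseg_append_singleton (f : List ℕ) (s : ℕ) :
    Dseg A (f ++ [s]) f.length (f.length + 1) = A f.length s := by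
  rw [Dseg, Set.Ico_add_one_right_eq_Icc, Set.Icc_self, Set.biInter_singleton,
    List.getD_append_right _ _ _ _ le_rfl, Nat.sub_self, List.getD_cons_zero]

end Dseg

section Extends

variable {μ : Measure (ℕ → Bool)} {Dom : Set (ℕ → Bool)} {A : ℕ → ℕ → Set (ℕ → Bool)}

theorem Extends.refl (p : Cond) : Extends μ Dom A p p :=
  ⟨List.prefix_refl _, le_rfl, fun h ↦ absurd rfl h⟩

theorem Extends.trans {p q r : Cond} (hqr : Extends μ Dom A r q) (hpq : Extends μ Dom A q p) :
    Extends μ Dom A r p := by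
  obtain ⟨hpre₁, hε₁, hμ₁⟩ := hpq
  obtain ⟨hpre₂, hε₂, hμ₂⟩ := hqr
  have hofReal : ∀ {a b : ℚ}, a ≤ b → ENNReal.ofReal a ≤ ENNReal.ofReal b := fun h ↦
    ENNReal.ofReal_le_ofReal (by exact_mod_cast h)
  refine ⟨hpre₁.trans hpre₂, hε₂.trans hε₁, fun hpr ↦ ?_⟩
  by_cases hpq : p.f = q.f
  · rw [hpq] at hpr ⊢
    exact (hμ₂ hpr).trans_le (hofReal hε₁)
  have hsplit : μ (Dom \ Dseg A r.f p.f.length r.f.length) ≤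
      μ (Dom \ Dseg A q.f p.f.length q.f.length) +
        μ (Dom \ Dseg A r.f q.f.length r.f.length) := by
    rw [← Dseg_eq_of_prefix hpre₂ le_rfl]
    refine (measure_mono ?_).trans (measure_union_le _ _)
    rw [← Set.sdiff_inter]
    exact Set.sdiff_subset_sdiff_right (Dseg_inter_Dseg_subset _ _ _ _)
  have hqr_le : μ (Dom \ Dseg A r.f q.f.length r.f.length) + ENNReal.ofReal r.ε ≤
      ENNReal.ofReal q.ε := by
    by_cases hqr : q.f = r.f
    · rw [hqr, Dseg, Set.Ico_self, Set.biInter_empty, Set.sdiff_univ, measure_empty, zero_add]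
      exact hofReal hε₂
    · exact (hμ₂ hqr).le
  calc μ (Dom \ Dseg A r.f p.f.length r.f.length) + ENNReal.ofReal r.ε
      ≤ μ (Dom \ Dseg A q.f p.f.length q.f.length) +
          (μ (Dom \ Dseg A r.f q.f.length r.f.length) + ENNReal.ofReal r.ε) := by
        rw [← add_assoc]; gcongr
    _ ≤ μ (Dom \ Dseg A q.f p.f.length q.f.length) + ENNReal.ofReal q.ε := by gcongr
    _ < ENNReal.ofReal p.ε := hμ₁ hpq

end Extends

theorem exists_extends_length_succ {μ : Measure (ℕ → Bool)} {Dom : Set (ℕ → Bool)}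
    {A : ℕ → ℕ → Set (ℕ → Bool)} (hDom : μ Dom ≠ ∞) (hmeas : ∀ k s, MeasurableSet (A k s))
    (hmono : ∀ k, Monotone (A k)) (hdom : ∀ k, Dom ⊆ ⋃ s, A k s) (p : Cond) :
    ∃ q : Cond, Extends μ Dom A q p ∧ q.f.length = p.f.length + 1 := by
  have hε : 0 < p.ε / 2 := half_pos p.pos
  have hεℝ : (0 : ℝ) < (p.ε / 2 : ℚ) := by exact_mod_cast hε
  obtain ⟨s, hs⟩ := ((tendsto_measure_diff_atTop_zero hDom (hmeas _)
    (hmono p.f.length) (hdom _)).eventually_lt_const (ENNReal.ofReal_pos.mpr hεℝ)).exists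
  refine ⟨⟨p.f ++ [s], p.ε / 2, hε⟩,
    ⟨List.prefix_append _ _, half_le_self p.pos.le, fun _ ↦ ?_⟩, by simp⟩
  rw [List.length_append, List.length_singleton, Dseg_append_singleton]
  calc μ (Dom \ A p.f.length s) + ENNReal.ofReal (p.ε / 2 : ℚ)
      < ENNReal.ofReal (p.ε / 2 : ℚ) + ENNReal.ofReal (p.ε / 2 : ℚ) := by
        gcongr; exact ENNReal.ofReal_ne_top
    _ = ENNReal.ofReal p.ε := by
        rw [← ENNReal.ofReal_add hεℝ.le hεℝ.le, ← Rat.cast_add, add_halves]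

theorem exists_extends_length_add {μ : Measure (ℕ → Bool)} {Dom : Set (ℕ → Bool)}
    {A : ℕ → ℕ → Set (ℕ → Bool)} (hDom : μ Dom ≠ ∞) (hmeas : ∀ k s, MeasurableSet (A k s))
    (hmono : ∀ k, Monotone (A k)) (hdom : ∀ k, Dom ⊆ ⋃ s, A k s) (p : Cond) (m : ℕ) :
    ∃ q : Cond, Extends μ Dom A q p ∧ q.f.length = p.f.length + m := by
  induction m with
  | zero => exact ⟨p, .refl p, rfl⟩
  | succ m ih =>
    obtain ⟨q, hqp, hq⟩ := ih
    obtain ⟨r, hrq, hr⟩ := exists_extends_length_succ hDom hmeas hmono hdom q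
    exact ⟨r, hrq.trans hqp, by rw [hr, hq, add_assoc]⟩

/-- Conditions with arbitrarily long strings are dense. -/
theorem dense_long_conditions
    (μ : Measure (ℕ → Bool)) [IsFiniteMeasure μ]
    (Dom : Set (ℕ → Bool)) (A : ℕ → ℕ → Set (ℕ → Bool))
    (hmeas : ∀ k s, MeasurableSet (A k s))
    (hmono : ∀ k, ∀ s s' : ℕ, s ≤ s' → A k s ⊆ A k s')
    (hdom : ∀ k, Dom ⊆ ⋃ s : ℕ, A k s)
    (p : Cond) (n : ℕ) :
    ∃ q : Cond, Extends μ Dom A q p ∧ n < q.f.length := by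
  obtain ⟨q, hqp, hq⟩ := exists_extends_length_add (measure_ne_top μ Dom) hmeas hmono hdom p (n + 1)
  exact ⟨q, hqp, by omega⟩
end

section
/- Promises are kept along generic sequences: assume Dom and each set A k s are measurable. Let p be a condition and let g : ℕ → ℕ agree with f^p on {0,…,n^p−1}. Suppose that for every m > n^p there is a condition q extending p such that n^q ≥ m and f^q k = g k for all k < n^q. Then μ(Dom \ ⋂_{k ≥ n^p} A k (g k)) ≤ ε^p. -/
/-!
The bad set `Dom \ ⋂_{k ≥ n^p} A k (g k)` is the increasing union over `m` of the sets
`Dom \ ⋂_{k ∈ [n^p, m)} A k (g k)`, so its measure is the supremum of theirs. For `m > n^p`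
pick an extension `q` of `p` along `g` with `n^q ≥ m`: the `m`-th set lies inside
`Dom \ D_{[n^p, n^q)}[f^q]`, whose measure is below `ε^p` by the definition of extension.
-/

open MeasureTheory

open Set

section FiniteSegments

variable {α : Type*} (D : Set α) (B : ℕ → Set α) (n : ℕ)

theorem biInter_le_eq_iInter_biInter_Ico :
    ⋂ (k : ℕ) (_ : n ≤ k), B k = ⋂ m, ⋂ k ∈ Ico n m, B k := by
  ext x
  simp only [mem_iInter, mem_Ico]
  exact ⟨fun h _ k hk => h k hk.1, fun h k hk => h (k + 1) k ⟨hk, k.lt_succ_self⟩⟩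

theorem monotone_diff_biInter_Ico : Monotone fun m => D \ ⋂ k ∈ Ico n m, B k :=
  fun _ _ hab => sdiff_subset_sdiff_right (biInter_subset_biInter_left (Ico_subset_Ico_right hab))

end FiniteSegments

theorem Dseg_subset_biInter_Ico (A : ℕ → ℕ → Set (ℕ → Bool)) {l : List ℕ} {g : ℕ → ℕ}
    {n m : ℕ} (hlg : ∀ k < l.length, l.getD k 0 = g k) (hm : m ≤ l.length) :
    Dseg A l n l.length ⊆ ⋂ k ∈ Ico n m, A k (g k) := by
  refine subset_iInter₂ fun k hk => ?_
  have hkl : k < l.length := hk.2.trans_le hm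
  rw [← hlg k hkl]
  exact biInter_subset_of_mem ⟨hk.1, hkl⟩

theorem Extends.measure_diff_Dseg_lt {μ : Measure (ℕ → Bool)} {Dom : Set (ℕ → Bool)}
    {A : ℕ → ℕ → Set (ℕ → Bool)} {q p : Cond} (hqp : Extends μ Dom A q p)
    (hlen : p.f.length < q.f.length) :
    μ (Dom \ Dseg A q.f p.f.length q.f.length) < ENNReal.ofReal (p.ε : ℝ) :=
  le_self_add.trans_lt (hqp.2.2 fun h => hlen.ne (congrArg List.length h))

theorem promises_are_kept_general
    (μ : Measure (ℕ → Bool)) (Dom : Set (ℕ → Bool)) (A : ℕ → ℕ → Set (ℕ → Bool))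
    (p : Cond) (g : ℕ → ℕ)
    (H : ∀ m > p.f.length, ∃ q : Cond, Extends μ Dom A q p ∧ m ≤ q.f.length ∧
      ∀ k < q.f.length, q.f.getD k 0 = g k) :
    μ (Dom \ ⋂ (k : ℕ) (_ : p.f.length ≤ k), A k (g k)) ≤ ENNReal.ofReal (p.ε : ℝ) := by
  rw [biInter_le_eq_iInter_biInter_Ico, sdiff_iInter,
    (monotone_diff_biInter_Ico Dom _ _).measure_iUnion]
  refine iSup_le fun m => ?_
  rcases le_or_gt m p.f.length with hm | hm
  · simp [Ico_eq_empty_of_le hm]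
  obtain ⟨q, hqp, hmq, hqg⟩ := H m hm
  calc μ (Dom \ ⋂ k ∈ Ico p.f.length m, A k (g k))
      ≤ μ (Dom \ Dseg A q.f p.f.length q.f.length) :=
        measure_mono (sdiff_subset_sdiff_right (Dseg_subset_biInter_Ico A hqg hmq))
    _ ≤ ENNReal.ofReal (p.ε : ℝ) := (hqp.measure_diff_Dseg_lt (hm.trans_le hmq)).le

/-- Promises are kept along generic sequences: if `g` agrees with `f^p` below `n^p`
and arbitrarily long extensions of `p` along `g` exist, then the `ε^p`-promise holds
for `g` from `n^p` onwards. -/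
theorem promises_are_kept
    (μ : Measure (ℕ → Bool)) (Dom : Set (ℕ → Bool)) (A : ℕ → ℕ → Set (ℕ → Bool))
    (hDom : MeasurableSet Dom) (hmeas : ∀ k s, MeasurableSet (A k s))
    (p : Cond) (g : ℕ → ℕ)
    (hg : ∀ k < p.f.length, g k = p.f.getD k 0)
    (H : ∀ m > p.f.length, ∃ q : Cond, Extends μ Dom A q p ∧ m ≤ q.f.length ∧
      ∀ k < q.f.length, q.f.getD k 0 = g k) :
    μ (Dom \ ⋂ (k : ℕ) (_ : p.f.length ≤ k), A k (g k)) ≤ ENNReal.ofReal (p.ε : ℝ) :=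
  promises_are_kept_general μ Dom A p g H
end
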